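/- Let 𝒫 be a configuration of n points in general position in the plane whose convex hull has size 3. Let P, Q, R be three distinct points of 𝒫 which are not exactly the three vertices of the convex hull. Then n(P,Q) + n(P,R) + n(Q,R) < n² − 4n + 3. -/

import Mathlib

open scoped Classical

noncomputable section

/-- The set Pts is in general position: no three distinct points are collinear. -/
def GenPos (Pts : Finset (ℝ × ℝ)) : Prop :=
  ∀ A ∈ Pts, ∀ B ∈ Pts, ∀ C ∈ Pts, A ≠ B → A ≠ C → B ≠ C →
    ¬ Collinear ℝ ({A, B, C} : Set (ℝ × ℝ))

/-- `sepCount Pts P Q` is the number of unordered pairs `{R, S}` of points of `Pts \ {P, Q}`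
such that the line through `R` and `S` strictly separates `P` and `Q`. -/
def sepCount (Pts : Finset (ℝ × ℝ)) (P Q : ℝ × ℝ) : ℕ :=
  ((Finset.powersetCard 2 (Pts \ {P, Q})).filter
    (fun s => (affineSpan ℝ (↑s : Set (ℝ × ℝ))).SOppSide P Q)).card

/-- The vertices of the convex hull of `Pts` (its extreme points). -/
def hullVertices (Pts : Finset (ℝ × ℝ)) : Set (ℝ × ℝ) :=
  Set.extremePoints ℝ (convexHull ℝ (↑Pts : Set (ℝ × ℝ)))

/-- `Q : ZMod k → ℝ × ℝ` lists the points of `S` in convex position, in cyclic order: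
`Q` is an injective enumeration of `S` and, for every `i`, all points of `S` other than
`Q i` and `Q (i+1)` lie strictly on the same side of the line through `Q i` and `Q (i+1)`
(i.e. each consecutive pair spans an edge of the convex hull of `S`). -/
def IsConvexCycle (k : ℕ) (S : Set (ℝ × ℝ)) (Q : ZMod k → ℝ × ℝ) : Prop :=
  Function.Injective Q ∧ Set.range Q = S ∧
    ∀ i : ZMod k, ∀ x ∈ S, ∀ y ∈ S,
      x ∉ ({Q i, Q (i + 1)} : Set (ℝ × ℝ)) → y ∉ ({Q i, Q (i + 1)} : Set (ℝ × ℝ)) →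
        (affineSpan ℝ ({Q i, Q (i + 1)} : Set (ℝ × ℝ))).SSameSide x y

/-!
Put `T = 𝒫 \ {P, Q, R}`, `m = n - 3`. A pair counted in `n(X, Y)` either lies in `T`, or
consists of the third point `Z` and some `x ∈ T`. No line strictly separates all three pairs
among `P, Q, R`, so each pair in `T` is counted at most twice, giving `≤ m (m - 1)`. If every
`x ∈ T` were counted three times, i.e. each line `Zx` separated the other two points, all of `T`
would lie in the triangle `PQR` and `P, Q, R` would be the three hull vertices; so these terms
total at most `3m - 1`, and `m (m - 1) + 3m - 1 = n² - 4n + 2`.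
-/

/-- Twice the signed area of the triangle `a b c`. -/
def orient (a b c : ℝ × ℝ) : ℝ :=
  (b.1 - a.1) * (c.2 - a.2) - (b.2 - a.2) * (c.1 - a.1)

lemma orient_eq_zero_of_mem_affineSpan_pair {a b x : ℝ × ℝ} (hx : x ∈ line[ℝ, a, b]) :
    orient a b x = 0 := by
  obtain ⟨t, rfl⟩ := mem_affineSpan_pair_iff_exists_lineMap_eq.1 hx
  simp only [orient, AffineMap.lineMap_apply_module, Prod.fst_add, Prod.snd_add, Prod.smul_fst,
    Prod.smul_snd, smul_eq_mul]
  ring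

lemma mem_affineSpan_pair_of_orient_eq_zero {a b x : ℝ × ℝ} (hab : a ≠ b)
    (hx : orient a b x = 0) : x ∈ line[ℝ, a, b] := by
  have hpos : 0 < (b.1 - a.1) ^ 2 + (b.2 - a.2) ^ 2 := by
    by_contra! h
    exact hab (Prod.ext (by nlinarith [sq_nonneg (b.1 - a.1), sq_nonneg (b.2 - a.2)])
      (by nlinarith [sq_nonneg (b.1 - a.1), sq_nonneg (b.2 - a.2)]))
  refine mem_affineSpan_pair_iff_exists_lineMap_eq.2
    ⟨((x.1 - a.1) * (b.1 - a.1) + (x.2 - a.2) * (b.2 - a.2)) /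
      ((b.1 - a.1) ^ 2 + (b.2 - a.2) ^ 2), ?_⟩
  unfold orient at hx
  ext <;> simp only [AffineMap.lineMap_apply_module, Prod.fst_add, Prod.snd_add, Prod.smul_fst,
    Prod.smul_snd, smul_eq_mul] <;> field_simp
  · linear_combination (b.2 - a.2) * hx
  · linear_combination -(b.1 - a.1) * hx

lemma orient_mul_orient_neg_of_sOppSide {a b x y : ℝ × ℝ} (hab : a ≠ b)
    (h : line[ℝ, a, b].SOppSide x y) : orient a b x * orient a b y < 0 := by
  have hx : orient a b x ≠ 0 := fun h0 =>
    h.left_notMem (mem_affineSpan_pair_of_orient_eq_zero hab h0)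
  obtain ⟨p, hp, ⟨t, ⟨ht0, ht1⟩, rfl⟩, hpx, hpy⟩ := h.exists_sbtw
  have ht0 : 0 < t := ht0.lt_of_ne (by rintro rfl; simp at hpx)
  have ht1 : t < 1 := ht1.lt_of_ne (by rintro rfl; simp at hpy)
  -- `orient a b` is affine and vanishes at the crossing point `lineMap x y t`
  have hcross : (1 - t) * orient a b x + t * orient a b y = 0 := by
    rw [← orient_eq_zero_of_mem_affineSpan_pair hp]
    simp only [orient, AffineMap.lineMap_apply_module, Prod.fst_add, Prod.snd_add, Prod.smul_fst,
      Prod.smul_snd, smul_eq_mul]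
    ring
  have key : t * (orient a b x * orient a b y) = -((1 - t) * (orient a b x * orient a b x)) := by
    linear_combination orient a b x * hcross
  refine neg_of_mul_neg_right (a := t) ?_ ht0.le
  rw [key]
  exact neg_neg_of_pos (mul_pos (sub_pos.2 ht1) (mul_self_pos.2 hx))

lemma not_sOppSide_all_pairs {s : AffineSubspace ℝ (ℝ × ℝ)} {P Q R : ℝ × ℝ} :
    ¬ (s.SOppSide P Q ∧ s.SOppSide P R ∧ s.SOppSide Q R) := fun ⟨hPQ, hPR, hQR⟩ =>
  (hPQ.symm.trans hPR).not_sOppSide hQR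

def CeviansSeparate (P Q R x : ℝ × ℝ) : Prop :=
  line[ℝ, R, x].SOppSide P Q ∧ line[ℝ, Q, x].SOppSide P R ∧ line[ℝ, P, x].SOppSide Q R

lemma mem_convexHull_of_ceviansSeparate {P Q R x : ℝ × ℝ} (hPx : P ≠ x) (hQx : Q ≠ x)
    (hRx : R ≠ x) (h : CeviansSeparate P Q R x) : x ∈ convexHull ℝ {P, Q, R} := by
  obtain ⟨hR, hQ, hP⟩ := h
  -- barycentric coordinates of `x`, up to the common factor `orient P Q R = a + b + c`
  set a := orient x Q R
  set b := orient P x R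
  set c := orient P Q x
  have hab : 0 < a * b := by
    have := orient_mul_orient_neg_of_sOppSide hRx hR
    have e : orient R x P * orient R x Q = -(a * b) := by simp only [a, b, orient]; ring
    linarith
  have hac : 0 < a * c := by
    have := orient_mul_orient_neg_of_sOppSide hQx hQ
    have e : orient Q x P * orient Q x R = -(a * c) := by simp only [a, c, orient]; ring
    linarith
  have hbc : 0 < b * c := by
    have := orient_mul_orient_neg_of_sOppSide hPx hP
    have e : orient P x Q * orient P x R = -(b * c) := by simp only [b, c, orient]; ring
    linarith
  have ha : 0 < a * (a + b + c) := by nlinarith [sq_nonneg a]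
  have hb : 0 < b * (a + b + c) := by nlinarith [sq_nonneg b]
  have hc : 0 < c * (a + b + c) := by nlinarith [sq_nonneg c]
  have hΔ : a + b + c ≠ 0 := by rintro h0; simp [h0] at ha
  have hx : x = (a / (a + b + c)) • P + (b / (a + b + c)) • Q + (c / (a + b + c)) • R := by
    have e1 : (a + b + c) * x.1 = a * P.1 + b * Q.1 + c * R.1 := by
      simp only [a, b, c, orient]; ring
    have e2 : (a + b + c) * x.2 = a * P.2 + b * Q.2 + c * R.2 := by
      simp only [a, b, c, orient]; ring
    ext <;> simp only [Prod.fst_add, Prod.snd_add, Prod.smul_fst, Prod.smul_snd, smul_eq_mul] <;>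
      field_simp <;> linarith
  have hmem := (convex_convexHull ℝ ({P, Q, R} : Set (ℝ × ℝ))).sum_mem (t := Finset.univ)
    (w := ![a / (a + b + c), b / (a + b + c), c / (a + b + c)]) (z := ![P, Q, R])
    (fun i _ => by fin_cases i <;> exact (div_pos_iff.2 (mul_pos_iff.1 ‹_›)).le) (by
      simp only [Fin.sum_univ_three, Matrix.cons_val]; field_simp)
    (fun i _ => by fin_cases i <;> exact subset_convexHull ℝ _ (by simp))
  simpa only [Fin.sum_univ_three, Matrix.cons_val, ← hx] using hmem

open Finset

lemma card_filter_powersetCard_two_insert {α : Type*} [DecidableEq α] {z : α} {S : Finset α}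
    (hz : z ∉ S) (p : Finset α → Prop) [DecidablePred p] :
    #{s ∈ powersetCard 2 (insert z S) | p s} =
      #{x ∈ S | p {z, x}} + #{s ∈ powersetCard 2 S | p s} := by
  rw [powersetCard_succ_insert hz, filter_union, card_union_of_disjoint, add_comm, powersetCard_one,
    map_eq_image, image_image, filter_image, card_image_of_injOn]
  · rfl
  · intro x hx y _ hxy
    have hx' : x ∈ ({z, y} : Finset α) := by simpa using congrArg (x ∈ ·) hxy
    rcases mem_insert.1 hx' with rfl | hxy
    · exact absurd (mem_filter.1 hx).1 hz
    · exact mem_singleton.1 hxy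
  · refine disjoint_filter_filter (disjoint_left.2 fun s hs hs' => ?_)
    obtain ⟨t, -, rfl⟩ := mem_image.1 hs'
    exact hz ((mem_powersetCard.1 hs).1 (mem_insert_self z t))

lemma sepCount_eq_card_filter (Pts : Finset (ℝ × ℝ)) (P Q : ℝ × ℝ) :
    sepCount Pts P Q =
      #((powersetCard 2 (Pts \ {P, Q})).filter fun s : Finset (ℝ × ℝ) =>
        (affineSpan ℝ (s : Set (ℝ × ℝ))).SOppSide P Q) := by
  -- the definition counts the images of the pairs under the coercion to `Set`
  have h : ∀ U : Finset (Finset (ℝ × ℝ)),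
      (U >>= fun s => pure (s : Set (ℝ × ℝ))) = U.image (↑) := fun U => sup_singleton_apply U _
  rw [sepCount, h, filter_image, card_image_of_injective _ coe_injective]

lemma sepCount_eq_add {Pts : Finset (ℝ × ℝ)} {X Y Z : ℝ × ℝ} (hZ : Z ∈ Pts) (hZX : Z ≠ X)
    (hZY : Z ≠ Y) :
    sepCount Pts X Y = #{x ∈ Pts \ {X, Y, Z} | line[ℝ, Z, x].SOppSide X Y} +
      #((powersetCard 2 (Pts \ {X, Y, Z})).filter fun s : Finset (ℝ × ℝ) =>
        (affineSpan ℝ (s : Set (ℝ × ℝ))).SOppSide X Y) := by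
  have hsplit : Pts \ {X, Y} = insert Z (Pts \ {X, Y, Z}) := by
    ext w
    simp only [mem_sdiff, mem_insert, mem_singleton]
    constructor
    · tauto
    · rintro (rfl | h) <;> tauto
  rw [sepCount_eq_card_filter, hsplit, card_filter_powersetCard_two_insert (by simp)]
  simp only [coe_pair]

section ThreeFilters

variable {α : Type*} (U : Finset α) (p q r : α → Prop) [DecidablePred p] [DecidablePred q]
  [DecidablePred r]

lemma card_filter_add_card_filter_add_card_filter_le_two_mul
    (h : ∀ a ∈ U, ¬(p a ∧ q a ∧ r a)) :
    #{a ∈ U | p a} + #{a ∈ U | q a} + #{a ∈ U | r a} ≤ 2 * #U := by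
  simp only [card_filter, ← sum_add_distrib]
  calc _ ≤ ∑ _ ∈ U, 2 := sum_le_sum fun a ha => by have := h a ha; split_ifs <;> simp_all
    _ = 2 * #U := by rw [sum_const, smul_eq_mul, mul_comm]

lemma card_filter_add_card_filter_add_card_filter_lt_three_mul {a : α} (ha : a ∈ U)
    (h : ¬(p a ∧ q a ∧ r a)) :
    #{a ∈ U | p a} + #{a ∈ U | q a} + #{a ∈ U | r a} < 3 * #U := by
  simp only [card_filter, ← sum_add_distrib]
  calc _ < ∑ _ ∈ U, 3 := sum_lt_sum (fun b _ => by split_ifs <;> simp)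
        ⟨a, ha, by split_ifs <;> simp_all⟩
    _ = 3 * #U := by rw [sum_const, smul_eq_mul, mul_comm]

end ThreeFilters

lemma exists_not_ceviansSeparate_of_ne_hullVertices {Pts : Finset (ℝ × ℝ)} {P Q R : ℝ × ℝ}
    (hP : P ∈ Pts) (hQ : Q ∈ Pts) (hR : R ∈ Pts) (hPQ : P ≠ Q) (hPR : P ≠ R) (hQR : Q ≠ R)
    (hhull : (hullVertices Pts).ncard = 3)
    (hnot : ({P, Q, R} : Set (ℝ × ℝ)) ≠ hullVertices Pts) :
    ∃ x ∈ Pts \ {P, Q, R}, ¬ CeviansSeparate P Q R x := by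
  by_contra! hinside
  have hsub : ({P, Q, R} : Set (ℝ × ℝ)) ⊆ Pts := by
    simp only [Set.insert_subset_iff, Set.singleton_subset_iff, mem_coe]
    exact ⟨hP, hQ, hR⟩
  have hPts : (Pts : Set (ℝ × ℝ)) ⊆ convexHull ℝ {P, Q, R} := by
    intro x hx
    by_cases hxPQR : x ∈ ({P, Q, R} : Set (ℝ × ℝ))
    · exact subset_convexHull ℝ _ hxPQR
    · simp only [Set.mem_insert_iff, Set.mem_singleton_iff, not_or] at hxPQR
      obtain ⟨hxP, hxQ, hxR⟩ := hxPQR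
      exact mem_convexHull_of_ceviansSeparate (Ne.symm hxP) (Ne.symm hxQ) (Ne.symm hxR)
        (hinside x (by simp [mem_coe.1 hx, hxP, hxQ, hxR]))
  have hvert : hullVertices Pts ⊆ {P, Q, R} := by
    rw [hullVertices,
      (convexHull_min hPts (convex_convexHull ℝ _)).antisymm (convexHull_mono hsub)]
    exact extremePoints_convexHull_subset
  refine hnot (Set.eq_of_subset_of_ncard_le hvert ?_ (Set.toFinite _)).symm
  rw [hhull, Set.ncard_eq_three.2 ⟨P, Q, R, hPQ, hPR, hQR, rfl⟩]

theorem sepCount_sum_lt_of_not_hull_general (n : ℕ) (Pts : Finset (ℝ × ℝ))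
    (hcard : Pts.card = n)
    (hhull : (hullVertices Pts).ncard = 3)
    (P Q R : ℝ × ℝ) (hP : P ∈ Pts) (hQ : Q ∈ Pts) (hR : R ∈ Pts)
    (hPQ : P ≠ Q) (hPR : P ≠ R) (hQR : Q ≠ R)
    (hnot : ({P, Q, R} : Set (ℝ × ℝ)) ≠ hullVertices Pts) :
    (sepCount Pts P Q + sepCount Pts P R + sepCount Pts Q R : ℤ)
      < (n : ℤ)^2 - 4 * n + 3 := by
  obtain ⟨x, hxT, hx⟩ :=
    exists_not_ceviansSeparate_of_ne_hullVertices hP hQ hR hPQ hPR hQR hhull hnot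
  rw [sepCount_eq_add hR hPR.symm hQR.symm, sepCount_eq_add hQ hPQ.symm hQR,
    sepCount_eq_add hP hPQ hPR, pair_comm R Q, pair_comm R P, insert_comm Q P]
  set T := Pts \ {P, Q, R}
  have hpairs := card_filter_add_card_filter_add_card_filter_le_two_mul (powersetCard 2 T)
    (fun s : Finset (ℝ × ℝ) => (affineSpan ℝ (s : Set (ℝ × ℝ))).SOppSide P Q)
    (fun s => (affineSpan ℝ (s : Set (ℝ × ℝ))).SOppSide P R)
    (fun s => (affineSpan ℝ (s : Set (ℝ × ℝ))).SOppSide Q R) fun _ _ => not_sOppSide_all_pairs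
  have hpoints := card_filter_add_card_filter_add_card_filter_lt_three_mul T
    (fun y => line[ℝ, R, y].SOppSide P Q) (fun y => line[ℝ, Q, y].SOppSide P R)
    (fun y => line[ℝ, P, y].SOppSide Q R) hxT hx
  have hT : #T + 3 = n := by
    rw [← hcard, ← card_eq_three.2 ⟨P, Q, R, hPQ, hPR, hQR, rfl⟩]
    exact card_sdiff_add_card_eq_card (by simp [insert_subset_iff, hP, hQ, hR])
  obtain ⟨k, hk⟩ : ∃ k, #T = k + 1 := Nat.exists_eq_add_one.2 (card_pos.2 ⟨x, hxT⟩)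
  have hchoose : (k + 1).choose 2 * 2 = (k + 1) * k := by
    rw [← Nat.add_one_mul_choose_eq, Nat.choose_one_right]
  rw [card_powersetCard, hk] at hpairs
  rw [hk] at hpoints
  rw [← hT, hk]
  zify at hpairs hpoints hchoose
  push_cast
  linarith

/-- If the convex hull of a configuration of `n` points in general position has size `3`, and
`P`, `Q`, `R` are three distinct points of the configuration which are not exactly the three
hull vertices, then `n(P,Q) + n(P,R) + n(Q,R) < n² - 4n + 3`. -/
theorem sepCount_sum_lt_of_not_hull (n : ℕ) (Pts : Finset (ℝ × ℝ))
    (hgen : GenPos Pts) (hcard : Pts.card = n)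
    (hhull : (hullVertices Pts).ncard = 3)
    (P Q R : ℝ × ℝ) (hP : P ∈ Pts) (hQ : Q ∈ Pts) (hR : R ∈ Pts)
    (hPQ : P ≠ Q) (hPR : P ≠ R) (hQR : Q ≠ R)
    (hnot : ({P, Q, R} : Set (ℝ × ℝ)) ≠ hullVertices Pts) :
    (sepCount Pts P Q + sepCount Pts P R + sepCount Pts Q R : ℤ)
      < (n : ℤ)^2 - 4 * n + 3 :=
  sepCount_sum_lt_of_not_hull_general n Pts hcard hhull P Q R hP hQ hR hPQ hPR hQR hnot
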